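/- arXiv:1210.2539 — 3 statements merged into one kernel-verified Lean document; each statement's English description precedes it below -/
import Mathlib

section
/- Let ρ : [0, T) → ℝ be a differentiable function with ρ(0) > 0 satisfying ρ'(t) ≥ ρ(t)³/n for all t ∈ [0, T), where n > 0. Then T ≤ n/(2ρ(0)²). -/
/-- If `ρ : [0,T) → ℝ` is differentiable with `ρ(0) > 0` and satisfies
`ρ'(t) ≥ ρ(t)³/n` on `[0,T)` (`n > 0`), then `T ≤ n/(2ρ(0)²)`. -/
theorem ode_blowup_time_bound
    {n T : ℝ} (hn : 0 < n) (hT : 0 < T) (ρ ρ' : ℝ → ℝ)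
    (hderiv : ∀ t ∈ Set.Ico (0 : ℝ) T, HasDerivWithinAt ρ (ρ' t) (Set.Ico 0 T) t)
    (h0 : 0 < ρ 0)
    (hineq : ∀ t ∈ Set.Ico (0 : ℝ) T, ρ t ^ 3 / n ≤ ρ' t) :
    T ≤ n / (2 * ρ 0 ^ 2) := by
  have hcont : ContinuousOn ρ (Set.Ico 0 T) := fun t ht => (hderiv t ht).continuousWithinAt
  -- Step 1: positivity
  have hpos : ∀ t ∈ Set.Ico (0 : ℝ) T, 0 < ρ t := by
    by_contra h
    push_neg at h
    obtain ⟨t₁, ht₁, hρt₁⟩ := h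
    have hsub : Set.Icc (0:ℝ) t₁ ⊆ Set.Ico 0 T :=
      Set.Icc_subset_Ico_right ht₁.2
    set S : Set ℝ := Set.Icc 0 t₁ ∩ ρ ⁻¹' Set.Iic 0 with hS
    have hSclosed : IsClosed S :=
      (hcont.mono hsub).preimage_isClosed_of_isClosed isClosed_Icc isClosed_Iic
    have hSne : S.Nonempty := ⟨t₁, ⟨ht₁.1, le_refl _⟩, hρt₁⟩
    have hSbdd : BddBelow S := ⟨0, fun x hx => hx.1.1⟩
    set t₀ := sInf S with ht₀def
    have ht₀S : t₀ ∈ S := hSclosed.csInf_mem hSne hSbdd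
    have ht₀0 : 0 ≤ t₀ := ht₀S.1.1
    have ht₀t₁ : t₀ ≤ t₁ := ht₀S.1.2
    have hbefore : ∀ s ∈ Set.Ico (0:ℝ) t₀, 0 < ρ s := by
      intro s hs
      by_contra hc
      push_neg at hc
      have : s ∈ S := ⟨⟨hs.1, hs.2.le.trans ht₀t₁⟩, hc⟩
      exact absurd (csInf_le hSbdd this) (not_le.mpr hs.2)
    have hmono : MonotoneOn ρ (Set.Icc 0 t₀) := by
      have hint : interior (Set.Icc (0:ℝ) t₀) = Set.Ioo 0 t₀ := interior_Icc
      apply monotoneOn_of_hasDerivWithinAt_nonneg (f' := ρ') (convex_Icc 0 t₀)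
        (hcont.mono ((Set.Icc_subset_Icc_right ht₀t₁).trans hsub))
      · intro x hx
        rw [hint] at hx
        exact (hderiv x (hsub ⟨hx.1.le, hx.2.le.trans ht₀t₁⟩)).mono
          (by rw [hint]; exact (Set.Ioo_subset_Icc_self.trans
            ((Set.Icc_subset_Icc_right ht₀t₁).trans hsub)))
      · intro x hx
        rw [hint] at hx
        have hρx : 0 < ρ x := hbefore x ⟨hx.1.le, hx.2⟩
        have := hineq x (hsub ⟨hx.1.le, hx.2.le.trans ht₀t₁⟩)
        have : 0 < ρ x ^ 3 / n := by positivity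
        linarith [hineq x (hsub ⟨hx.1.le, hx.2.le.trans ht₀t₁⟩)]
    have : ρ 0 ≤ ρ t₀ := hmono ⟨le_refl _, ht₀0⟩ ⟨ht₀0, le_refl _⟩ ht₀0
    have : ρ t₀ ≤ 0 := ht₀S.2
    linarith
  -- Step 2: the function g t = 2/n * t + (ρ t ^ 2)⁻¹ is antitone
  set g : ℝ → ℝ := fun t => 2 / n * t + (ρ t ^ 2)⁻¹ with hg
  have key : ∀ t₁ ∈ Set.Ico (0:ℝ) T, t₁ < n / (2 * ρ 0 ^ 2) := by
    intro t₁ ht₁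
    have hsub : Set.Icc (0:ℝ) t₁ ⊆ Set.Ico 0 T := Set.Icc_subset_Ico_right ht₁.2
    have hanti : AntitoneOn g (Set.Icc 0 t₁) := by
      have hint : interior (Set.Icc (0:ℝ) t₁) = Set.Ioo 0 t₁ := interior_Icc
      apply antitoneOn_of_hasDerivWithinAt_nonpos
        (f' := fun x => 2 / n + -(2 * ρ x ^ 1 * ρ' x) / (ρ x ^ 2) ^ 2)
        (convex_Icc 0 t₁)
      · -- continuity
        apply ContinuousOn.add
        · exact (continuous_const.mul continuous_id).continuousOn
        · exact ((hcont.mono hsub).pow 2).inv₀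
            (fun x hx => pow_ne_zero 2 (hpos x (hsub hx)).ne')
      · intro x hx
        rw [hint] at hx
        have hxmem : x ∈ Set.Ico (0:ℝ) T := hsub ⟨hx.1.le, hx.2.le⟩
        have hρx : 0 < ρ x := hpos x hxmem
        have hIoo : Set.Ioo (0:ℝ) t₁ ⊆ Set.Ico 0 T :=
          Set.Ioo_subset_Icc_self.trans hsub
        have hd : HasDerivWithinAt ρ (ρ' x) (Set.Ioo 0 t₁) x :=
          (hderiv x hxmem).mono hIoo
        have h1 : HasDerivWithinAt (fun t => (ρ t ^ 2)⁻¹)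
            (-(2 * ρ x ^ 1 * ρ' x) / (ρ x ^ 2) ^ 2) (Set.Ioo 0 t₁) x :=
          (hd.pow 2).inv (pow_ne_zero 2 hρx.ne')
        have h2 : HasDerivWithinAt (fun t => 2 / n * t) (2 / n) (Set.Ioo 0 t₁) x := by
          simpa using (hasDerivWithinAt_id x (Set.Ioo 0 t₁)).const_mul (2 / n)
        rw [hint]
        exact h2.add h1
      · intro x hx
        rw [hint] at hx
        have hxmem : x ∈ Set.Ico (0:ℝ) T := hsub ⟨hx.1.le, hx.2.le⟩
        have hρx : 0 < ρ x := hpos x hxmem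
        have hρ' : ρ x ^ 3 / n ≤ ρ' x := hineq x hxmem
        have hn' : ρ x ^ 3 ≤ n * ρ' x := by
          rw [div_le_iff₀ hn] at hρ'; linarith [hρ']
        have hρ4 : (0:ℝ) < (ρ x ^ 2) ^ 2 := by positivity
        have hkey : 2 / n ≤ 2 * ρ x ^ 1 * ρ' x / (ρ x ^ 2) ^ 2 := by
          rw [div_le_div_iff₀ hn hρ4]
          ring_nf
          nlinarith [mul_le_mul_of_nonneg_left hn' (by positivity : (0:ℝ) ≤ 2 * ρ x)]
        rw [neg_div]
        linarith
    have h01 : (0:ℝ) ∈ Set.Icc 0 t₁ := ⟨le_refl _, ht₁.1⟩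
    have ht₁1 : t₁ ∈ Set.Icc (0:ℝ) t₁ := ⟨ht₁.1, le_refl _⟩
    have := hanti h01 ht₁1 ht₁.1
    have hρt₁ : 0 < ρ t₁ := hpos t₁ ⟨ht₁.1, ht₁.2⟩
    have hinv : 0 < (ρ t₁ ^ 2)⁻¹ := by positivity
    have h2 : 2 / n * t₁ < (ρ 0 ^ 2)⁻¹ := by
      simp only [hg, mul_zero, zero_add] at this
      linarith
    rw [lt_div_iff₀ (by positivity : (0:ℝ) < 2 * ρ 0 ^ 2)]
    have h2' : 2 / n * t₁ * ρ 0 ^ 2 < 1 := by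
      have := mul_lt_mul_of_pos_right h2 (pow_pos h0 2)
      rwa [inv_mul_cancel₀ (by positivity : (ρ 0 ^ 2) ≠ 0)] at this
    have h3 := mul_lt_mul_of_pos_left h2' hn
    calc t₁ * (2 * ρ 0 ^ 2) = n * (2 / n * t₁ * ρ 0 ^ 2) := by
          field_simp
      _ < n * 1 := h3
      _ = n := mul_one n
  by_contra hcon
  push_neg at hcon
  have hb : n / (2 * ρ 0 ^ 2) ∈ Set.Ico (0:ℝ) T := ⟨by positivity, hcon⟩
  exact absurd (key _ hb) (lt_irrefl _)
end

section
/- Let ρ : [0, T) → ℝ be differentiable with ρ(0) > 0 and ρ'(t) ≥ ρ(t)³/n for all t. Then ρ(t) ≥ ρ(0)/√(1 - 2ρ(0)²t/n) for all t ∈ [0, T) with t < n/(2ρ(0)²); in particular ρ(t) > 0 and ρ(t) ≥ ρ(0) for all t ∈ [0,T). -/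
open Set

/-- Comparison helper: `-ρ` stays below any strict supersolution barrier `B`. -/
lemma ode_comp_aux {n T : ℝ} (ρ ρ' : ℝ → ℝ)
    (hderiv : ∀ t ∈ Set.Ico (0 : ℝ) T, HasDerivWithinAt ρ (ρ' t) (Set.Ico 0 T) t)
    {b : ℝ} (hb : b ∈ Set.Ico (0 : ℝ) T)
    (B B' : ℝ → ℝ) (hB0 : -ρ 0 ≤ B 0)
    (hBc : ContinuousOn B (Set.Icc 0 b))
    (hB' : ∀ x ∈ Set.Ico 0 b, HasDerivAt B (B' x) x)
    (hbound : ∀ x ∈ Set.Ico 0 b, ρ x = -B x → -ρ' x < B' x) :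
    -ρ b ≤ B b := by
  have hsub : Set.Icc (0:ℝ) b ⊆ Set.Ico 0 T := fun x hx => ⟨hx.1, lt_of_le_of_lt hx.2 hb.2⟩
  have hf' : ∀ x ∈ Set.Ico (0:ℝ) b, HasDerivWithinAt (fun s => -ρ s) (-ρ' x) (Set.Ici x) x := by
    intro x hx
    have hxT : x ∈ Set.Ico (0:ℝ) T := ⟨hx.1, hx.2.trans hb.2⟩
    have hmem : Set.Ico (0:ℝ) T ∈ nhdsWithin x (Set.Ici x) := by
      apply mem_nhdsWithin.2 ⟨Set.Iio T, isOpen_Iio, hxT.2, ?_⟩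
      intro y hy
      exact ⟨le_trans hxT.1 hy.2, hy.1⟩
    exact ((hderiv x hxT).mono_of_mem_nhdsWithin hmem).neg
  have hfc : ContinuousOn (fun s => -ρ s) (Set.Icc 0 b) := by
    have : ContinuousOn ρ (Set.Icc 0 b) := fun x hx =>
      ((hderiv x (hsub hx)).continuousWithinAt).mono hsub
    exact this.neg
  have main := image_le_of_deriv_right_lt_deriv_boundary' hfc hf' hB0 hBc
    (fun x hx => (hB' x hx).hasDerivWithinAt)
    (fun x hx hfx => hbound x hx (by
      have hfx' : -ρ x = B x := hfx
      linarith))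
    (Set.right_mem_Icc.2 hb.1)
  exact main

/-- If `ρ : [0,T) → ℝ` is differentiable with `ρ(0) > 0` and `ρ'(t) ≥ ρ(t)³/n`,
then `ρ(t) ≥ ρ(0)/√(1 - 2ρ(0)²t/n)` for all `t ∈ [0,T)` with `t < n/(2ρ(0)²)`;
in particular `ρ(t) > 0` and `ρ(t) ≥ ρ(0)` for all `t ∈ [0,T)`. -/
theorem ode_comparison_lower_bound
    {n T : ℝ} (hn : 0 < n) (hT : 0 < T) (ρ ρ' : ℝ → ℝ)
    (hderiv : ∀ t ∈ Set.Ico (0 : ℝ) T, HasDerivWithinAt ρ (ρ' t) (Set.Ico 0 T) t)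
    (h0 : 0 < ρ 0)
    (hineq : ∀ t ∈ Set.Ico (0 : ℝ) T, ρ t ^ 3 / n ≤ ρ' t) :
    ∀ t ∈ Set.Ico (0 : ℝ) T,
      (t < n / (2 * ρ 0 ^ 2) →
        ρ 0 / Real.sqrt (1 - 2 * ρ 0 ^ 2 * t / n) ≤ ρ t) ∧
      0 < ρ t ∧ ρ 0 ≤ ρ t := by
  intro t ht
  set c := ρ 0 with hc
  -- Part 1: ρ 0 ≤ ρ t via exponential subsolutions
  have hexp : ∀ l : ℝ, 0 < l → c * Real.exp (-(l * t)) ≤ ρ t := by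
    intro l hl
    have key := ode_comp_aux (n := n) ρ ρ' hderiv ht
      (fun s => -(c * Real.exp (-(l * s))))
      (fun s => c * l * Real.exp (-(l * s)))
      (by simp; exact hc.le)
      (by fun_prop)
      (fun x _ => by
        have h1 : HasDerivAt (fun s : ℝ => -(l * s)) (-l) x := by
          simpa using ((hasDerivAt_id x).const_mul l).fun_neg
        have h2 := ((h1.exp).const_mul c).fun_neg
        refine h2.congr_deriv ?_
        ring)
      ?_
    · simpa using key
    · intro x hx hcontact
      show -ρ' x < c * l * Real.exp (-(l * x))
      have hxT : x ∈ Set.Ico (0:ℝ) T := ⟨hx.1, hx.2.trans ht.2⟩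
      have hρx : ρ x = c * Real.exp (-(l * x)) := by simpa using hcontact
      have hρpos : 0 < ρ x := by
        rw [hρx]; positivity
      have h3 : ρ x ^ 3 / n ≤ ρ' x := hineq x hxT
      have h4 : 0 < ρ x ^ 3 / n := by positivity
      have h5 : 0 < c * l * Real.exp (-(l * x)) := by positivity
      linarith
  have hge : c ≤ ρ t := by
    have htend : Filter.Tendsto (fun l : ℝ => c * Real.exp (-(l * t)))
        (nhdsWithin 0 (Set.Ioi 0)) (nhds c) := by
      have hcont : Continuous fun l : ℝ => c * Real.exp (-(l * t)) := by fun_prop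
      have h1 : Filter.Tendsto (fun l : ℝ => c * Real.exp (-(l * t)))
          (nhdsWithin 0 (Set.Ioi 0)) (nhds (c * Real.exp (-(0 * t)))) :=
        (hcont.tendsto 0).mono_left nhdsWithin_le_nhds
      simpa using h1
    refine le_of_tendsto htend ?_
    filter_upwards [self_mem_nhdsWithin] with l hl using hexp l hl
  refine ⟨?_, lt_of_lt_of_le h0 hge, hge⟩
  -- Part 2: the sqrt bound
  intro htlt
  have hc2 : 0 < 2 * c ^ 2 := by positivity
  have hkey : 2 * c ^ 2 * t / n < 1 := by
    rw [div_lt_one hn]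
    have h1 : t * (2 * c ^ 2) < n := (lt_div_iff₀ hc2).mp htlt
    linarith
  have hsqrt : ∀ l ∈ Set.Ioo (0:ℝ) 1, c / Real.sqrt (1 - 2 * c ^ 2 * l * t / n) ≤ ρ t := by
    intro l hl
    set α := 2 * c ^ 2 * l / n with hα
    have hαpos : 0 < α := by
      have : (0:ℝ) < l := hl.1
      positivity
    have hg : ∀ x : ℝ, x ∈ Set.Icc 0 t → 0 < 1 - α * x := by
      intro x hx
      have h1 : α * x ≤ 2 * c ^ 2 * t / n := by
        have he : α * x = 2 * c ^ 2 * l * x / n := by rw [hα]; ring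
        rw [he, div_le_div_iff₀ hn hn]
        have hlx : l * x ≤ t := le_trans (mul_le_of_le_one_left hx.1 hl.2.le) hx.2
        nlinarith [mul_nonneg (mul_nonneg (sq_nonneg c) hn.le) (sub_nonneg.2 hlx)]
      linarith
    have key := ode_comp_aux (n := n) ρ ρ' hderiv ht
      (fun s => -(c / Real.sqrt (1 - α * s)))
      (fun s => -(c * α / (2 * (1 - α * s) * Real.sqrt (1 - α * s))))
      (by simp; exact hc.le)
      ?_ ?_ ?_
    · have h2 : c / Real.sqrt (1 - α * t) ≤ ρ t := by simpa using key
      calc c / Real.sqrt (1 - 2 * c ^ 2 * l * t / n) = c / Real.sqrt (1 - α * t) := by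
            rw [hα]; ring_nf
        _ ≤ ρ t := h2
    · -- continuity of B on Icc 0 t
      apply ContinuousOn.neg
      apply ContinuousOn.div continuousOn_const
      · fun_prop
      · intro x hx
        exact Real.sqrt_ne_zero'.2 (hg x hx)
    · -- derivative of B
      intro x hx
      have hgx : 0 < 1 - α * x := hg x ⟨hx.1, hx.2.le⟩
      have h1 : HasDerivAt (fun s : ℝ => 1 - α * s) (-α) x := by
        simpa using ((hasDerivAt_id x).const_mul α).const_sub 1
      have h2 : HasDerivAt (fun s : ℝ => Real.sqrt (1 - α * s))
          (-α / (2 * Real.sqrt (1 - α * x))) x := h1.sqrt hgx.ne'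
      have hsne : Real.sqrt (1 - α * x) ≠ 0 := Real.sqrt_ne_zero'.2 hgx
      have h3 := ((hasDerivAt_const x c).fun_div h2 hsne).fun_neg
      refine h3.congr_deriv ?_
      have hs : Real.sqrt (1 - α * x) ^ 2 = 1 - α * x := Real.sq_sqrt hgx.le
      rw [hs]
      field_simp
      ring
    · -- boundary strict inequality
      intro x hx hcontact
      show -ρ' x < -(c * α / (2 * (1 - α * x) * Real.sqrt (1 - α * x)))
      have hxT : x ∈ Set.Ico (0:ℝ) T := ⟨hx.1, hx.2.trans ht.2⟩
      have hgx : 0 < 1 - α * x := hg x ⟨hx.1, hx.2.le⟩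
      have hsx : 0 < Real.sqrt (1 - α * x) := Real.sqrt_pos.2 hgx
      have hρx : ρ x = c / Real.sqrt (1 - α * x) := by simpa using hcontact
      have hρpos : 0 < ρ x := by rw [hρx]; positivity
      have h3 : ρ x ^ 3 / n ≤ ρ' x := hineq x hxT
      have hs : Real.sqrt (1 - α * x) ^ 2 = 1 - α * x := Real.sq_sqrt hgx.le
      have hρ3 : ρ x ^ 3 = c ^ 3 / ((1 - α * x) * Real.sqrt (1 - α * x)) := by
        rw [hρx]
        rw [div_pow]
        congr 1
        nlinarith [hs]
      have hcpos : 0 < c := h0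
      have hval : 0 < c ^ 3 / ((1 - α * x) * Real.sqrt (1 - α * x) * n) := by positivity
      have hcα : c * α = 2 * c ^ 3 * l / n := by rw [hα]; ring
      have hBval : -(c * α / (2 * (1 - α * x) * Real.sqrt (1 - α * x)))
          = -(l * (c ^ 3 / ((1 - α * x) * Real.sqrt (1 - α * x) * n))) := by
        rw [hcα]
        have hgne : (1 - α * x) ≠ 0 := hgx.ne'
        have hsne : Real.sqrt (1 - α * x) ≠ 0 := Real.sqrt_ne_zero'.2 hgx
        field_simp
      rw [hBval]
      have hf : -ρ' x ≤ -(ρ x ^ 3 / n) := by linarith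
      have : -(ρ x ^ 3 / n) = -(c ^ 3 / ((1 - α * x) * Real.sqrt (1 - α * x) * n)) := by
        rw [hρ3]; field_simp
      rw [this] at hf
      have hll : l < 1 := hl.2
      have h6 := mul_pos (sub_pos.2 hll) hval
      nlinarith [h6]
  -- limit l → 1⁻
  have harg : 0 < 1 - 2 * c ^ 2 * t / n := by linarith
  have htend : Filter.Tendsto (fun l : ℝ => c / Real.sqrt (1 - 2 * c ^ 2 * l * t / n))
      (nhdsWithin 1 (Set.Iio 1)) (nhds (c / Real.sqrt (1 - 2 * c ^ 2 * t / n))) := by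
    have hcont : ContinuousAt (fun l : ℝ => c / Real.sqrt (1 - 2 * c ^ 2 * l * t / n)) 1 := by
      apply ContinuousAt.div continuousAt_const
      · fun_prop
      · simp only [mul_one]
        exact Real.sqrt_ne_zero'.2 (by linarith)
    have h1 : Filter.Tendsto (fun l : ℝ => c / Real.sqrt (1 - 2 * c ^ 2 * l * t / n))
        (nhdsWithin 1 (Set.Iio 1)) (nhds (c / Real.sqrt (1 - 2 * c ^ 2 * 1 * t / n))) :=
      hcont.tendsto.mono_left nhdsWithin_le_nhds
    simpa using h1
  refine le_of_tendsto htend ?_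
  filter_upwards [Ioo_mem_nhdsLT_of_mem (Set.mem_Ioc.2 ⟨zero_lt_one, le_refl 1⟩)] with l hl
  exact hsqrt l hl
end

section
/- Suppose H : M × [0,T) → ℝ is a positive smooth function on a compact manifold M satisfying ∂H/∂t ≥ Δ_t H + H³/n pointwise, where Δ_t are Laplacians of a smooth family of metrics. Then ρ(t) := min_{x∈M} H(x,t) satisfies the differential inequality D⁻ρ(t) ≥ ρ(t)³/n (lower Dini derivative), and consequently T ≤ n/(2ρ(0)²). -/
open Filter Set

lemma my_continuous_iInf {M : Type*} [TopologicalSpace M] [CompactSpace M] [Nonempty M]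
    {H : M → ℝ → ℝ} (hH : Continuous fun p : M × ℝ => H p.1 p.2) :
    Continuous fun t => ⨅ x, H x t := by
  have hinf : LipschitzWith 1 (fun f : C(M, ℝ) => ⨅ x, f x) := by
    apply LipschitzWith.of_dist_le_mul
    intro f g
    rw [NNReal.coe_one, one_mul, Real.dist_eq]
    have key : ∀ f g : C(M, ℝ), (⨅ x, f x) - (⨅ x, g x) ≤ dist f g := by
      intro f g
      have hb : BddBelow (Set.range fun x => f x) := (isCompact_range f.continuous).bddBelow
      have h2 : ∀ x : M, (⨅ y, f y) - dist f g ≤ g x := by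
        intro x
        have h1 : (⨅ y, f y) ≤ f x := ciInf_le hb x
        have h3 : f x - g x ≤ dist f g :=
          (le_abs_self _).trans (by rw [← Real.dist_eq]; exact ContinuousMap.dist_apply_le_dist x)
        linarith
      have := le_ciInf h2
      linarith
    exact abs_sub_le_iff.2 ⟨key f g, dist_comm f g ▸ key g f⟩
  let F : C(ℝ × M, ℝ) := ⟨fun p => H p.2 p.1, hH.comp continuous_swap⟩
  have : (fun t => ⨅ x, H x t) = (fun f : C(M, ℝ) => ⨅ x, f x) ∘ fun t => F.curry t := rfl
  rw [this]
  exact hinf.continuous.comp F.curry.continuous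

/-- Let `H > 0` be a smooth function on a compact space satisfying
`∂H/∂t ≥ Δ_t H + H³/n`, where `L x t` denotes the value of the elliptic term `Δ_t H`
(characterized by the minimum principle `hmin`).  Then `ρ(t) := min_x H(x,t)` satisfies
the Dini differential inequality `D⁻ρ(t) ≥ ρ(t)³/n`, and consequently
`T ≤ n/(2ρ(0)²)`. -/
theorem min_mean_curvature_dini_inequality
    {M : Type*} [TopologicalSpace M] [CompactSpace M] [Nonempty M]
    {T n : ℝ} (hT : 0 < T) (hn : 0 < n)
    (H H' L : M → ℝ → ℝ)
    (hHcont : Continuous fun p : M × ℝ => H p.1 p.2)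
    (hH'cont : Continuous fun p : M × ℝ => H' p.1 p.2)
    (hpos : ∀ x, ∀ t ∈ Set.Ico (0 : ℝ) T, 0 < H x t)
    (hderiv : ∀ x, ∀ t ∈ Set.Ico (0 : ℝ) T, HasDerivAt (H x) (H' x t) t)
    (hmin : ∀ t ∈ Set.Ico (0 : ℝ) T, ∀ x₀ : M, (∀ x, H x₀ t ≤ H x t) → 0 ≤ L x₀ t)
    (hineq : ∀ x, ∀ t ∈ Set.Ico (0 : ℝ) T, L x t + H x t ^ 3 / n ≤ H' x t) :
    (∀ t ∈ Set.Ico (0 : ℝ) T,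
      (⨅ x, H x t) ^ 3 / n ≤
        liminf (fun s => ((⨅ x, H x s) - (⨅ x, H x t)) / (s - t)) (nhdsWithin t (Set.Ioi t)))
    ∧ T ≤ n / (2 * (⨅ x, H x 0) ^ 2) := by
  suffices h : ∀ ρ : ℝ → ℝ, (∀ s, ρ s = ⨅ x, H x s) →
      ((∀ t ∈ Set.Ico (0 : ℝ) T,
        ρ t ^ 3 / n ≤ liminf (fun s => (ρ s - ρ t) / (s - t)) (nhdsWithin t (Set.Ioi t)))
      ∧ T ≤ n / (2 * ρ 0 ^ 2)) by
    exact h _ (fun s => rfl)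
  intro ρ hρdef
  have hc : ∀ t : ℝ, Continuous fun x : M => H x t := fun t =>
    hHcont.comp (continuous_id.prodMk continuous_const)
  have hbdd : ∀ t : ℝ, BddBelow (Set.range fun x => H x t) := fun t =>
    (isCompact_range (hc t)).bddBelow
  have hρ_le : ∀ t x, ρ t ≤ H x t := fun t x => (hρdef t).le.trans (ciInf_le (hbdd t) x)
  have hmin_ex : ∀ t : ℝ, ∃ x₀ : M, ∀ x, H x₀ t ≤ H x t := by
    intro t
    obtain ⟨x₀, -, h⟩ := IsCompact.exists_isMinOn isCompact_univ univ_nonempty (hc t).continuousOn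
    exact ⟨x₀, fun x => h (mem_univ x)⟩
  have hρ_eq : ∀ (t : ℝ) (x₀ : M), (∀ x, H x₀ t ≤ H x t) → ρ t = H x₀ t := fun t x₀ h =>
    le_antisymm (hρ_le t x₀) (by rw [hρdef t]; exact le_ciInf h)
  have hρ_pos : ∀ t ∈ Set.Ico (0 : ℝ) T, 0 < ρ t := by
    intro t ht
    obtain ⟨x₀, h⟩ := hmin_ex t
    rw [hρ_eq t x₀ h]; exact hpos x₀ t ht
  have hρ_cont : Continuous ρ := by
    have := my_continuous_iInf hHcont
    convert this using 1
    exact funext hρdef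
  have key : ∀ t ∈ Set.Ico (0 : ℝ) T,
      ρ t ^ 3 / n ≤ liminf (fun s => (ρ s - ρ t) / (s - t)) (nhdsWithin t (Set.Ioi t)) := by
    intro t ht
    obtain ⟨ht0, htT⟩ := ht
    obtain ⟨x₀, hx₀⟩ := hmin_ex t
    -- eventual lower bound on the slope, for every ε > 0
    have evb : ∀ ε > 0, ∀ᶠ s in nhdsWithin t (Set.Ioi t),
        ρ t ^ 3 / n - ε ≤ (ρ s - ρ t) / (s - t) := by
      intro ε hε
      set c' : ℝ := ρ t ^ 3 / n - ε with hc'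
      set W : Set (M × ℝ) := {p | c' < H' p.1 p.2} with hW
      have hWo : IsOpen W := isOpen_lt continuous_const hH'cont
      set A : Set M := {x | H x t ≤ ρ t} with hA
      have hA_comp : IsCompact A :=
        (isClosed_le (hc t) continuous_const).isCompact
      have hAW : A ×ˢ ({t} : Set ℝ) ⊆ W := by
        rintro ⟨x, τ⟩ ⟨hx, hτ⟩
        have hτ' : τ = t := hτ
        rw [Set.mem_setOf_eq, hτ']
        have hxmin : ∀ y, H x t ≤ H y t := fun y => le_trans hx (hρ_le t y)
        have hL := hmin t ⟨ht0, htT⟩ x hxmin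
        have h1 := hineq x t ⟨ht0, htT⟩
        have hHx : H x t = ρ t := le_antisymm hx (hρ_le t x)
        rw [hHx] at h1
        simp only [hc']
        linarith
      obtain ⟨U, v, hUo, hvo, hAU, htv, hUvW⟩ :=
        generalized_tube_lemma hA_comp isCompact_singleton hWo hAW
      set K : Set M := Uᶜ with hK
      have hKc : IsCompact K := hUo.isClosed_compl.isCompact
      set Z : Set (M × ℝ) := {p | ρ p.2 < H p.1 p.2} with hZ
      have hZo : IsOpen Z := isOpen_lt (hρ_cont.comp continuous_snd) hHcont
      have hKZ : K ×ˢ ({t} : Set ℝ) ⊆ Z := by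
        rintro ⟨x, τ⟩ ⟨hx, hτ⟩
        have hτ' : τ = t := hτ
        simp only [Z, mem_setOf_eq, hτ']
        by_contra hcon
        push_neg at hcon
        exact hx (hAU hcon)
      obtain ⟨U₂, v₂, -, hv₂o, hKU₂, htv₂, hUv₂Z⟩ :=
        generalized_tube_lemma hKc isCompact_singleton hZo hKZ
      obtain ⟨δ₁, hδ₁pos, hball⟩ := Metric.mem_nhds_iff.1 (hvo.mem_nhds (htv rfl))
      have hev : ∀ᶠ s in nhdsWithin t (Set.Ioi t),
          s ∈ Set.Ioo t (min (t + δ₁) T) ∧ s ∈ v₂ := by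
        refine Filter.Eventually.and ?_ ?_
        · exact Ioo_mem_nhdsGT_of_mem ⟨le_rfl, lt_min (by linarith) htT⟩
        · exact eventually_nhdsWithin_of_eventually_nhds
            ((hv₂o.mem_nhds (htv₂ rfl)) : v₂ ∈ nhds t)
      filter_upwards [hev] with s hs
      obtain ⟨⟨hts, hsmin⟩, hsv₂⟩ := hs
      rw [lt_min_iff] at hsmin
      obtain ⟨hsδ, hsT⟩ := hsmin
      obtain ⟨xs, hxs⟩ := hmin_ex s
      have hxsU : xs ∈ U := by
        by_contra hxs'
        have hmem : (xs, s) ∈ Z := hUv₂Z ⟨hKU₂ hxs', hsv₂⟩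
        simp only [Z, mem_setOf_eq] at hmem
        exact absurd (hρ_eq s xs hxs) (by linarith [hmem]; )
      have hcont_xs : ContinuousOn (H xs) (Set.Icc t s) :=
        (hHcont.comp (continuous_const.prodMk continuous_id)).continuousOn
      have hderiv_xs : ∀ ξ ∈ Set.Ioo t s, HasDerivAt (H xs) (H' xs ξ) ξ := fun ξ hξ =>
        hderiv xs ξ ⟨le_trans ht0 hξ.1.le, hξ.2.trans hsT⟩
      obtain ⟨ξ, hξ, hξeq⟩ :=
        exists_hasDerivAt_eq_slope (H xs) (H' xs) hts hcont_xs hderiv_xs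
      have hξv : ξ ∈ v := by
        apply hball
        rw [Metric.mem_ball, Real.dist_eq, abs_lt]
        constructor <;> [linarith [hξ.1]; linarith [hξ.2]]
      have hWξ : c' < H' xs ξ := by
        have := hUvW (Set.mk_mem_prod hxsU hξv)
        simpa [W] using this
      have hst : (0:ℝ) < s - t := sub_pos.2 hts
      have h1 : H xs s - H xs t ≤ ρ s - ρ t := by
        have e1 := hρ_eq s xs hxs
        have e2 := hρ_le t xs
        linarith
      have h2 : c' < (H xs s - H xs t) / (s - t) := by rw [← hξeq]; exact hWξ
      have h3 : (H xs s - H xs t) / (s - t) ≤ (ρ s - ρ t) / (s - t) :=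
        div_le_div_of_nonneg_right h1 hst.le
      have hc'' : c' = ρ t ^ 3 / n - ε := hc'
      linarith
    -- upper bound for the slope near t
    have hd : HasDerivAt (H x₀) (H' x₀ t) t := hderiv x₀ t ⟨ht0, htT⟩
    have htend : Tendsto (fun s => (H x₀ s - H x₀ t) / (s - t)) (nhdsWithin t (Set.Ioi t))
        (nhds (H' x₀ t)) := by
      have h1 := hasDerivAt_iff_tendsto_slope.1 hd
      have h2 := h1.mono_left
        (nhdsWithin_mono t (fun z hz => ne_of_gt hz : Set.Ioi t ⊆ {t}ᶜ))
      have h3 : (fun s => (H x₀ s - H x₀ t) / (s - t)) = slope (H x₀) t := by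
        funext s; rw [slope_def_field]
      rw [h3]; exact h2
    have hub : ∀ᶠ s in nhdsWithin t (Set.Ioi t),
        (ρ s - ρ t) / (s - t) ≤ H' x₀ t + 1 := by
      have h4 := htend.eventually_lt_const (lt_add_one (H' x₀ t))
      filter_upwards [h4, self_mem_nhdsWithin] with s h4s hs
      have hst : (0:ℝ) < s - t := sub_pos.2 hs
      have h5 : ρ s - ρ t ≤ H x₀ s - H x₀ t := by
        have := hρ_le s x₀
        have := hρ_eq t x₀ hx₀
        linarith
      exact le_trans (div_le_div_of_nonneg_right h5 hst.le) h4s.le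
    have hbd : IsBoundedUnder (· ≤ ·) (nhdsWithin t (Set.Ioi t))
        (fun s => (ρ s - ρ t) / (s - t)) := ⟨H' x₀ t + 1, by simpa using hub⟩
    have hcob := hbd.isCoboundedUnder_ge
    apply le_of_forall_sub_le
    intro ε hε
    exact le_liminf_of_le hcob (evb ε hε)
  refine ⟨key, ?_⟩
  by_contra hcon
  push_neg at hcon
  have hρ0 : 0 < ρ 0 := hρ_pos 0 ⟨le_rfl, hT⟩
  obtain ⟨t, htl, htT⟩ := exists_between hcon
  have htpos : 0 < n / (2 * ρ 0 ^ 2) := by positivity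
  have ht0 : (0:ℝ) ≤ t := le_of_lt (lt_trans htpos htl)
  set g : ℝ → ℝ := fun s => (ρ s ^ 2)⁻¹ with hg
  have hρpos' : ∀ s ∈ Set.Icc (0:ℝ) t, 0 < ρ s := fun s hs =>
    hρ_pos s ⟨hs.1, lt_of_le_of_lt hs.2 htT⟩
  have hgcont : ContinuousOn g (Set.Icc 0 t) :=
    ((hρ_cont.pow 2).continuousOn).inv₀ fun s hs => (pow_pos (hρpos' s hs) 2).ne'
  set B : ℝ → ℝ := fun s => g 0 - 2 / n * s with hB
  have hBcont : ContinuousOn B (Set.Icc 0 t) :=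
    continuousOn_const.sub (continuousOn_const.mul continuousOn_id)
  have hB' : ∀ x ∈ Set.Ico (0:ℝ) t, HasDerivWithinAt B (-(2 / n)) (Set.Ici x) x := by
    intro x hx
    have h1 : HasDerivAt B (0 - 2 / n * 1) x :=
      (hasDerivAt_const x (g 0)).sub ((hasDerivAt_id x).const_mul (2 / n))
    simpa using h1.hasDerivWithinAt
  have bound : ∀ x ∈ Set.Ico (0:ℝ) t, ∀ r, -(2 / n) < r →
      ∃ᶠ z in nhdsWithin x (Set.Ioi x), slope g x z < r := by
    intro x hx r hr
    have hxT : x ∈ Set.Ico (0:ℝ) T := ⟨hx.1, lt_trans hx.2 htT⟩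
    have hρx : 0 < ρ x := hρ_pos x hxT
    have hk := key x hxT
    have hrn : -(r * n) / 2 < 1 := by
      rw [div_lt_one (by norm_num : (0:ℝ) < 2)]
      have h1 : -(2 / n) * n < r * n := mul_lt_mul_of_pos_right hr hn
      have h2 : -(2 / n) * n = -2 := by field_simp
      linarith
    set s0 : ℝ := max (-(r * n) / 2) 0 with hs0def
    have hs0lt : s0 < 1 := max_lt hrn one_pos
    have hs0nonneg : 0 ≤ s0 := le_max_right _ _
    set θ : ℝ := Real.sqrt ((s0 + 1) / 2) with hθdef
    have hθsq : θ ^ 2 = (s0 + 1) / 2 := Real.sq_sqrt (by linarith)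
    have hθpos : 0 < θ := Real.sqrt_pos.2 (by linarith)
    have hθlt : θ < 1 := by nlinarith [hθsq, hθpos]
    set c : ℝ := θ * (ρ x ^ 3 / n) with hcdef
    set q : ℝ := θ * (2 / ρ x ^ 3) with hqdef
    have hcpos : 0 < c := mul_pos hθpos (by positivity)
    have hqpos : 0 < q := mul_pos hθpos (by positivity)
    have hclt : c < ρ x ^ 3 / n := by
      have hv : 0 < ρ x ^ 3 / n := by positivity
      nlinarith [hθlt, hθpos, hv]
    have hqlt : q < 2 / ρ x ^ 3 := by
      have hv : 0 < 2 / ρ x ^ 3 := by positivity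
      nlinarith [hθlt, hθpos, hv]
    have hcq : -(c * q) < r := by
      have h1 : c * q = (s0 + 1) / n := by
        rw [hcdef, hqdef]
        have : θ * (ρ x ^ 3 / n) * (θ * (2 / ρ x ^ 3)) = 2 * θ ^ 2 / n := by
          field_simp
        rw [this, hθsq]; ring
      have h2 : -(r * n) < s0 + 1 := by
        have h3 := le_max_left (-(r * n) / 2) 0
        have h4 : -(r * n) / 2 ≤ s0 := h3
        linarith
      have h5 : -r < (s0 + 1) / n := by
        rw [lt_div_iff₀ hn]; linarith
      rw [h1]; linarith
    have hev1 : ∀ᶠ z in nhdsWithin x (Set.Ioi x), c < (ρ z - ρ x) / (z - x) := by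
      have hc_lt : c < liminf (fun s => (ρ s - ρ x) / (s - x)) (nhdsWithin x (Set.Ioi x)) :=
        lt_of_lt_of_le hclt hk
      rw [liminf_eq] at hc_lt
      by_cases hS : {a : ℝ | ∀ᶠ z in nhdsWithin x (Set.Ioi x), a ≤ (ρ z - ρ x) / (z - x)}.Nonempty
      · obtain ⟨a, ha, hca⟩ := exists_lt_of_lt_csSup hS hc_lt
        have ha' : ∀ᶠ z in nhdsWithin x (Set.Ioi x), a ≤ (ρ z - ρ x) / (z - x) := ha
        exact ha'.mono fun z hz => lt_of_lt_of_le hca hz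
      · rw [Set.not_nonempty_iff_eq_empty] at hS
        rw [hS, Real.sSup_empty] at hc_lt
        exact absurd hc_lt (by linarith)
    have hρtend : Tendsto ρ (nhdsWithin x (Set.Ioi x)) (nhds (ρ x)) :=
      (hρ_cont.tendsto x).mono_left nhdsWithin_le_nhds
    have hfac : Tendsto (fun z => (ρ z + ρ x) / (ρ z ^ 2 * ρ x ^ 2)) (nhdsWithin x (Set.Ioi x))
        (nhds ((ρ x + ρ x) / (ρ x ^ 2 * ρ x ^ 2))) :=
      (hρtend.add tendsto_const_nhds).div ((hρtend.pow 2).mul tendsto_const_nhds) (by positivity)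
    have hfaclim : (ρ x + ρ x) / (ρ x ^ 2 * ρ x ^ 2) = 2 / ρ x ^ 3 := by
      field_simp; ring
    have hev2 : ∀ᶠ z in nhdsWithin x (Set.Ioi x), q < (ρ z + ρ x) / (ρ z ^ 2 * ρ x ^ 2) :=
      hfac.eventually (eventually_gt_nhds (hfaclim ▸ hqlt))
    have hev3 : ∀ᶠ z in nhdsWithin x (Set.Ioi x), z ∈ Set.Ioo x T :=
      Ioo_mem_nhdsGT_of_mem ⟨le_rfl, hxT.2⟩
    apply Filter.Eventually.frequently
    filter_upwards [hev1, hev2, hev3] with z h1 h2 h3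
    have hzx : (0:ℝ) < z - x := sub_pos.2 h3.1
    have hρz : 0 < ρ z := hρ_pos z ⟨le_trans hx.1 h3.1.le, h3.2⟩
    have hslope : slope g x z =
        -(((ρ z - ρ x) / (z - x)) * ((ρ z + ρ x) / (ρ z ^ 2 * ρ x ^ 2))) := by
      rw [slope_def_field]
      simp only [hg]
      field_simp
      ring
    have hprod : c * q < ((ρ z - ρ x) / (z - x)) * ((ρ z + ρ x) / (ρ z ^ 2 * ρ x ^ 2)) :=
      mul_lt_mul'' h1 h2 hcpos.le hqpos.le
    rw [hslope]
    linarith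
  have ha0 : g 0 ≤ B 0 := le_of_eq (by simp [hB])
  have main := image_le_of_liminf_slope_right_le_deriv_boundary
    (B' := fun _ => -(2 / n)) hgcont ha0 hBcont hB' bound (right_mem_Icc.2 ht0)
  have hρt : 0 < ρ t := hρ_pos t ⟨ht0, htT⟩
  have hgtpos : 0 < g t := by simp only [hg]; positivity
  simp only [hg, hB] at main hgtpos
  have h6 : 2 / n * t < (ρ 0 ^ 2)⁻¹ := by linarith
  have h7 : n < t * (2 * ρ 0 ^ 2) := (div_lt_iff₀ (by positivity)).1 htl
  have hp : 0 < ρ 0 ^ 2 := by positivity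
  have h8 : 2 / n * t * ρ 0 ^ 2 < (ρ 0 ^ 2)⁻¹ * ρ 0 ^ 2 := mul_lt_mul_of_pos_right h6 hp
  rw [inv_mul_cancel₀ hp.ne'] at h8
  have h9 : 2 / n * t * ρ 0 ^ 2 * n < 1 * n := mul_lt_mul_of_pos_right h8 hn
  have h10 : 2 / n * t * ρ 0 ^ 2 * n = t * (2 * ρ 0 ^ 2) := by
    field_simp
  rw [h10, one_mul] at h9
  linarith
end
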